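/- In the setting of the localized conductances C^R and measure ν^R (as defined via a symmetric C with ν(x) = Σ_y C(x,y)|x-y|² ∈ (0,∞)), for all κ ∈ (0,1], R ≥ 1 and all x ∈ B(0,4R): (1/ν^R(x)) Σ_{y: |y-x| > κR} C^R(x,y) ≤ (1+2d)/(κ² R²). -/

import Mathlib

open scoped Classical

/-- Euclidean norm of a point of `ℤ^d`. -/
noncomputable def enorm {d : ℕ} (x : Fin d → ℤ) : ℝ :=
  Real.sqrt (∑ i, ((x i : ℝ)) ^ 2)

/-- Membership in the box `[-L,L]^d ∩ ℤ^d`. -/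
def inBox {d : ℕ} (L : ℕ) (x : Fin d → ℤ) : Prop := ∀ i, |x i| ≤ (L : ℤ)

/-- Localized conductances `C^R`. -/
noncomputable def CR {d : ℕ} (C : (Fin d → ℤ) → (Fin d → ℤ) → ℝ) (R : ℕ)
    (x y : Fin d → ℤ) : ℝ :=
  if inBox (2 * R) x ∨ inBox (2 * R) y then C x y
  else if _root_.enorm (x - y) = 1 then 1 else 0

/-- Localized measure `ν^R`. -/
noncomputable def nuR {d : ℕ} (C : (Fin d → ℤ) → (Fin d → ℤ) → ℝ) (R : ℕ)
    (x : Fin d → ℤ) : ℝ :=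
  if inBox (2 * R) x then ∑' y, C x y * _root_.enorm (x - y) ^ 2
  else if inBox (4 * R) x then 1 + ∑' y, C x y * _root_.enorm (x - y) ^ 2
  else 1

/-! Markov's inequality for the second moment: every jump longer than `κR` contributes at least
`(κR)²` to `∑_y C^R(x,y) |x-y|²`. This second moment is `ν(x)` inside `B(0,2R)`, and in the
annulus it exceeds `ν(x)` by at most the `2d` unit nearest-neighbour conductances, so in both
cases it is at most `(1 + 2d) ν^R(x)`. -/

open Finset

lemma enorm_sub_comm {d : ℕ} (x y : Fin d → ℤ) :
    _root_.enorm (x - y) = _root_.enorm (y - x) := by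
  simp only [_root_.enorm, Pi.sub_apply, Int.cast_sub, ← neg_sub (y _ : ℝ), neg_sq]

lemma Int.exists_eq_pi_single_of_sum_sq_eq_one {ι : Type*} [Fintype ι] [DecidableEq ι]
    (v : ι → ℤ) (h : ∑ i, v i ^ 2 = 1) : ∃ i, (v i = 1 ∨ v i = -1) ∧ v = Pi.single i (v i) := by
  obtain ⟨i, hi⟩ : ∃ i, v i ≠ 0 := by
    by_contra! h0
    simp [h0] at h
  have hvi : 1 ≤ v i ^ 2 := by
    have := pow_pos (abs_pos.2 hi) 2
    rw [sq_abs] at this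
    linarith
  refine ⟨i, sq_eq_one_iff.1 (le_antisymm (h ▸ single_le_sum (fun k _ => sq_nonneg (v k))
    (mem_univ i)) hvi), funext fun j => ?_⟩
  rcases eq_or_ne j i with rfl | hji
  · simp
  · have : v i ^ 2 + v j ^ 2 ≤ 1 := h ▸ (sum_pair (f := fun k => v k ^ 2) hji.symm).symm.le.trans
      (sum_le_univ_sum_of_nonneg fun k => sq_nonneg (v k))
    simp only [Pi.single_apply, hji, if_false]
    nlinarith [sq_nonneg (v j)]

def unitNeighbors {d : ℕ} (x : Fin d → ℤ) : Finset (Fin d → ℤ) :=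
  (univ ×ˢ {1, -1}).image fun p : Fin d × ℤ => x + Pi.single p.1 p.2

lemma card_unitNeighbors_le {d : ℕ} (x : Fin d → ℤ) : #(unitNeighbors x) ≤ 2 * d := by
  refine card_image_le.trans ?_
  simp [card_product, mul_comm]

lemma mem_unitNeighbors_of_enorm_sub_eq_one {d : ℕ} {x y : Fin d → ℤ}
    (h : _root_.enorm (x - y) = 1) : y ∈ unitNeighbors x := by
  have hsq : ∑ i, (x - y) i ^ 2 = 1 := by
    rw [_root_.enorm, Real.sqrt_eq_one] at h
    exact_mod_cast h
  obtain ⟨i, hi, hxy⟩ := Int.exists_eq_pi_single_of_sum_sq_eq_one _ hsq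
  refine mem_image.2 ⟨(i, -(x - y) i), ?_, ?_⟩
  · rcases hi with hi | hi <;> simp [hi]
  · rw [Pi.single_neg, ← hxy]
    abel

lemma hasSum_ite_mem_one {α : Type*} [DecidableEq α] (s : Finset α) :
    HasSum (fun y => if y ∈ s then (1 : ℝ) else 0) #s := by
  convert hasSum_sum_of_ne_finset_zero (s := s) (L := .unconditional α) fun y hy => if_neg hy
  simp

lemma tsum_ite_lt_le_tsum_mul_sq_div {α : Type*} (a w : α → ℝ) (ha : ∀ y, 0 ≤ a y)
    (hs : Summable fun y => a y * w y ^ 2) {r : ℝ} (hr : 0 < r) :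
    ∑' y, (if r < w y then a y else 0) ≤ (∑' y, a y * w y ^ 2) / r ^ 2 := by
  have hle : ∀ y, (if r < w y then a y else 0) ≤ a y * w y ^ 2 / r ^ 2 := fun y => by
    split_ifs with hy
    · rw [le_div_iff₀ (by positivity)]
      exact mul_le_mul_of_nonneg_left (pow_le_pow_left₀ hr.le hy.le 2) (ha y)
    · have := ha y
      positivity
  have hnonneg : ∀ y, 0 ≤ if r < w y then a y else 0 := fun y => by
    split_ifs
    exacts [ha y, le_rfl]
  rw [← tsum_div_const]
  exact ((hs.div_const _).of_nonneg_of_le hnonneg hle).tsum_le_tsum hle (hs.div_const _)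

section Localization

variable {d : ℕ} {C : (Fin d → ℤ) → (Fin d → ℤ) → ℝ} {R : ℕ} {x : Fin d → ℤ}

lemma CR_nonneg (hnonneg : ∀ x y, 0 ≤ C x y) (y : Fin d → ℤ) : 0 ≤ CR C R x y := by
  unfold CR
  split_ifs
  exacts [hnonneg x y, zero_le_one, le_rfl]

lemma CR_of_inBox (hx : inBox (2 * R) x) (y : Fin d → ℤ) : CR C R x y = C x y :=
  if_pos (Or.inl hx)

lemma CR_mul_sq_le_of_not_inBox (hnonneg : ∀ x y, 0 ≤ C x y) (hx : ¬ inBox (2 * R) x)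
    (y : Fin d → ℤ) :
    CR C R x y * _root_.enorm (x - y) ^ 2 ≤
      C x y * _root_.enorm (x - y) ^ 2 + if y ∈ unitNeighbors x then 1 else 0 := by
  have hC := mul_nonneg (hnonneg x y) (sq_nonneg (_root_.enorm (x - y)))
  unfold CR
  by_cases hy : inBox (2 * R) y
  · simp only [hx, hy, or_true, if_true]
    split_ifs <;> linarith
  · by_cases h1 : _root_.enorm (x - y) = 1
    · simp [hx, hy, h1, mem_unitNeighbors_of_enorm_sub_eq_one h1, hnonneg x y]
    · simp only [hx, hy, h1, or_self, if_false, zero_mul]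
      split_ifs <;> linarith

lemma summable_CR_mul_sq (hnonneg : ∀ x y, 0 ≤ C x y)
    (hsum : Summable fun y => C x y * _root_.enorm (x - y) ^ 2) :
    Summable fun y => CR C R x y * _root_.enorm (x - y) ^ 2 := by
  by_cases hx : inBox (2 * R) x
  · simpa only [CR_of_inBox hx] using hsum
  · exact (hsum.add (hasSum_ite_mem_one _).summable).of_nonneg_of_le
      (fun y => mul_nonneg (CR_nonneg hnonneg y) (sq_nonneg _))
      (CR_mul_sq_le_of_not_inBox hnonneg hx)

lemma nuR_nonneg (hnonneg : ∀ x y, 0 ≤ C x y) : 0 ≤ nuR C R x := by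
  have : 0 ≤ ∑' y, C x y * _root_.enorm (x - y) ^ 2 :=
    tsum_nonneg fun y => mul_nonneg (hnonneg x y) (sq_nonneg _)
  unfold nuR
  split_ifs <;> linarith

lemma tsum_CR_mul_sq_le (hnonneg : ∀ x y, 0 ≤ C x y)
    (hsum : Summable fun y => C x y * _root_.enorm (x - y) ^ 2) (hx : inBox (4 * R) x) :
    ∑' y, CR C R x y * _root_.enorm (x - y) ^ 2 ≤ (1 + 2 * d) * nuR C R x := by
  set ν := ∑' y, C x y * _root_.enorm (x - y) ^ 2
  have hν : 0 ≤ ν := tsum_nonneg fun y => mul_nonneg (hnonneg x y) (sq_nonneg _)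
  have hd : (0 : ℝ) ≤ d := d.cast_nonneg
  by_cases hx2 : inBox (2 * R) x
  · simp only [CR_of_inBox hx2, nuR, if_pos hx2]
    nlinarith
  · have hneighbors := hasSum_ite_mem_one (unitNeighbors x)
    have hcard : (#(unitNeighbors x) : ℝ) ≤ 2 * d := by exact_mod_cast card_unitNeighbors_le x
    calc ∑' y, CR C R x y * _root_.enorm (x - y) ^ 2
        ≤ ∑' y, (C x y * _root_.enorm (x - y) ^ 2 + if y ∈ unitNeighbors x then 1 else 0) :=
          (summable_CR_mul_sq hnonneg hsum).tsum_le_tsum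
            (CR_mul_sq_le_of_not_inBox hnonneg hx2) (hsum.add hneighbors.summable)
      _ = ν + #(unitNeighbors x) := by rw [hsum.tsum_add hneighbors.summable, hneighbors.tsum_eq]
      _ ≤ (1 + 2 * d) * nuR C R x := by
          simp only [nuR, if_neg hx2, if_pos hx]
          nlinarith

end Localization

theorem stmt_6_general (d : ℕ) (C : (Fin d → ℤ) → (Fin d → ℤ) → ℝ)
    (hnonneg : ∀ x y, 0 ≤ C x y)
    (hsum : ∀ x, Summable (fun y => C x y * _root_.enorm (x - y) ^ 2))
    (R : ℕ) (hR : 1 ≤ R) (κ : ℝ) (hκ1 : 0 < κ)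
    (x : Fin d → ℤ) (hx : inBox (4 * R) x) :
    (∑' y, if κ * R < _root_.enorm (y - x) then CR C R x y else 0) / nuR C R x ≤
      (1 + 2 * d) / (κ ^ 2 * R ^ 2) := by
  have hr : 0 < κ * R := mul_pos hκ1 (by exact_mod_cast hR)
  have hmarkov := tsum_ite_lt_le_tsum_mul_sq_div (CR C R x) (fun y => _root_.enorm (x - y))
    (CR_nonneg hnonneg) (summable_CR_mul_sq hnonneg (hsum x)) hr
  refine div_le_of_le_mul₀ (nuR_nonneg hnonneg) (by positivity) ?_
  calc _ ≤ (∑' y, CR C R x y * _root_.enorm (x - y) ^ 2) / (κ * R) ^ 2 := by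
        simpa only [enorm_sub_comm x] using hmarkov
    _ ≤ (1 + 2 * d) * nuR C R x / (κ * R) ^ 2 := by
        gcongr
        exact tsum_CR_mul_sq_le hnonneg (hsum x) hx
    _ = (1 + 2 * d) / (κ ^ 2 * R ^ 2) * nuR C R x := by ring

theorem stmt_6 (d : ℕ) (hd : 1 ≤ d) (C : (Fin d → ℤ) → (Fin d → ℤ) → ℝ)
    (hnonneg : ∀ x y, 0 ≤ C x y) (hsymm : ∀ x y, C x y = C y x)
    (hsum : ∀ x, Summable (fun y => C x y * _root_.enorm (x - y) ^ 2))
    (hνpos : ∀ x, 0 < ∑' y, C x y * _root_.enorm (x - y) ^ 2)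
    (R : ℕ) (hR : 1 ≤ R) (κ : ℝ) (hκ1 : 0 < κ) (hκ2 : κ ≤ 1)
    (x : Fin d → ℤ) (hx : inBox (4 * R) x) :
    (∑' y, if κ * R < _root_.enorm (y - x) then CR C R x y else 0) / nuR C R x ≤
      (1 + 2 * d) / (κ ^ 2 * R ^ 2) :=
  stmt_6_general d C hnonneg hsum R hR κ hκ1 x hx
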